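/- arXiv:1903.09531 — 3 statements merged into one kernel-verified Lean document; each statement's English description precedes it below -/
import Mathlib

section
/- Let t_0 ∈ ℕ and t_1, t_2, t_3 positive integers, and let D = TE(T^-, [t_0, t_1, t_2, t_3]) be the digraph obtained by expanding each vertex of the negative triangle into a class of twins of sizes t_1, t_2, t_3 and adding t_0 isolated vertices. Then the characteristic polynomial of the Hermitian adjacency matrix of D equals μ^{n-3}(μ^3 - (t_1 t_2 + t_1 t_3 + t_2 t_3)μ + 2 t_1 t_2 t_3), where n = t_0 + t_1 + t_2 + t_3. -/
open Complex Matrix Polynomial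

/-- Hermitian adjacency matrix of the negative triangle `T⁻`. -/
def negTriangleH : Matrix (Fin 3) (Fin 3) ℂ := !![0, 1, I; 1, 0, -I; -I, I, 0]

/-- Index type of the twin expansion `TE(T⁻, [t₀, t₁, t₂, t₃])`:
`t₀` isolated vertices and twin classes of sizes `t₁, t₂, t₃`. -/
abbrev TETriIdx (t₀ t₁ t₂ t₃ : ℕ) := Fin t₀ ⊕ (Fin t₁ ⊕ Fin t₂ ⊕ Fin t₃)

/-- The class of a vertex of the twin expansion: `none` for isolated vertices,
`some u` for a twin of vertex `u` of `T⁻`. -/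
def triClass {t₀ t₁ t₂ t₃ : ℕ} : TETriIdx t₀ t₁ t₂ t₃ → Option (Fin 3)
  | .inl _ => none
  | .inr (.inl _) => some 0
  | .inr (.inr (.inl _)) => some 1
  | .inr (.inr (.inr _)) => some 2

/-- Hermitian adjacency matrix of the twin expansion `TE(T⁻, [t₀, t₁, t₂, t₃])`. -/
def TETriH (t₀ t₁ t₂ t₃ : ℕ) :
    Matrix (TETriIdx t₀ t₁ t₂ t₃) (TETriIdx t₀ t₁ t₂ t₃) ℂ :=
  Matrix.of fun x y =>
    match triClass x, triClass y with
    | some u, some v => if u = v then 0 else negTriangleH u v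
    | _, _ => 0

/-! The twin expansion factors as `H = E A Eᵀ`, where `A` is the matrix of `T⁻` and `E` is the
`0/1` matrix recording the class of each vertex. Since `AB` and `BA` have the same
characteristic polynomial up to a power of `X`, `χ(H) = X ^ (n - 3) χ(A Eᵀ E)`, and
`Eᵀ E = diag(t₁, t₂, t₃)`, so everything reduces to a `3 × 3` determinant. -/

namespace Matrix

variable {ι V : Type*} (R : Type*) [DecidableEq V] [NonAssocSemiring R]

def classIndicator (c : ι → Option V) : Matrix ι V R :=
  Matrix.of fun x u => if c x = some u then 1 else 0

theorem classIndicator_mul_mul_transpose_apply [Fintype V] (c : ι → Option V)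
    (A : Matrix V V R) (x y : ι) :
    (classIndicator R c * A * (classIndicator R c)ᵀ) x y =
      match c x, c y with
      | some u, some v => A u v
      | _, _ => 0 := by
  cases hx : c x <;> cases hy : c y <;> simp [classIndicator, mul_apply, hx, hy]

theorem classIndicator_transpose_mul_self [Fintype ι] (c : ι → Option V) :
    (classIndicator R c)ᵀ * classIndicator R c =
      diagonal fun u => ((Finset.univ.filter fun x => c x = some u).card : R) := by
  ext u v
  simp only [mul_apply, transpose_apply, classIndicator, of_apply, diagonal_apply, mul_ite,
    mul_one, mul_zero, ← ite_and]
  split_ifs with huv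
  · simp [huv, Finset.sum_boole]
  · exact Finset.sum_eq_zero fun x _ =>
      if_neg fun ⟨hv, hu⟩ => huv (Option.some_inj.mp (hu ▸ hv))

end Matrix

open Matrix

theorem negTriangleH_apply_self (u : Fin 3) : negTriangleH u u = 0 := by
  fin_cases u <;> rfl

theorem TETriH_eq_classIndicator_mul (t₀ t₁ t₂ t₃ : ℕ) :
    TETriH t₀ t₁ t₂ t₃ =
      classIndicator ℂ triClass * negTriangleH * (classIndicator ℂ triClass)ᵀ := by
  ext x y
  rw [classIndicator_mul_mul_transpose_apply, TETriH, of_apply]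
  rcases triClass x with _ | u <;> rcases triClass y with _ | v <;> try rfl
  dsimp only
  split_ifs with h
  · rw [h, negTriangleH_apply_self]
  · rfl

theorem card_triClass_eq_some (t₀ t₁ t₂ t₃ : ℕ) (u : Fin 3) :
    (Finset.univ.filter fun x : TETriIdx t₀ t₁ t₂ t₃ => triClass x = some u).card =
      ![t₁, t₂, t₃] u := by
  rw [Finset.card_filter]
  fin_cases u <;> simp [Fintype.sum_sum_type, triClass]

theorem charpoly_negTriangleH_mul_diagonal (t : Fin 3 → ℂ) :
    (negTriangleH * diagonal t).charpoly =
      X ^ 3 - C (t 0 * t 1 + t 0 * t 2 + t 1 * t 2) * X + C (2 * (t 0 * t 1 * t 2)) := by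
  apply Polynomial.funext
  intro μ
  rw [charpoly, ← coe_evalRingHom, RingHom.map_det, det_fin_three]
  simp only [RingHom.mapMatrix_apply, map_apply, coe_evalRingHom, charmatrix_apply, mul_diagonal]
  simp [negTriangleH]
  linear_combination (μ * (t 0 * t 2 + t 1 * t 2) - 2 * (t 0 * t 1 * t 2)) * I_sq

theorem stmt_15 (t₀ t₁ t₂ t₃ : ℕ) (h₁ : 0 < t₁) (h₂ : 0 < t₂) (h₃ : 0 < t₃) :
    (TETriH t₀ t₁ t₂ t₃).charpoly
      = X ^ (t₀ + t₁ + t₂ + t₃ - 3) *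
        (X ^ 3 - C ((t₁ * t₂ + t₁ * t₃ + t₂ * t₃ : ℕ) : ℂ) * X
          + C ((2 * (t₁ * t₂ * t₃) : ℕ) : ℂ)) := by
  have hcard : Fintype.card (TETriIdx t₀ t₁ t₂ t₃) = t₀ + t₁ + t₂ + t₃ := by
    simp only [Fintype.card_sum, Fintype.card_fin, add_assoc]
  rw [TETriH_eq_classIndicator_mul, Matrix.mul_assoc,
    charpoly_mul_comm_of_le _ _ (by simp only [hcard, Fintype.card_fin]; omega), Matrix.mul_assoc,
    classIndicator_transpose_mul_self, hcard, Fintype.card_fin, charpoly_negTriangleH_mul_diagonal]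
  simp [card_triClass_eq_some]
end

section
/- Let H be an n×n complex Hermitian matrix and let t be a vector of positive integers of length n. Let H' be the block matrix whose (u,v) block is H_{uv}·J_{t_u×t_v} for u ≠ v and the zero block for u = v (where J is the all-ones matrix). Then rank H' = rank H, and H' has the same number of positive eigenvalues and the same number of negative eigenvalues as H. -/
open Matrix

lemma quad_eq {m : Type*} [Fintype m] [DecidableEq m]
    (A : Matrix m m ℂ) (hA : A.IsHermitian) (x : m → ℂ) :
    star x ⬝ᵥ A *ᵥ x =
      ((∑ i, hA.eigenvalues i *
        Complex.normSq ((star (hA.eigenvectorUnitary : Matrix m m ℂ) *ᵥ x) i) : ℝ) : ℂ) := by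
  set U : Matrix m m ℂ := (hA.eigenvectorUnitary : Matrix m m ℂ) with hU
  set c : m → ℂ := star U *ᵥ x with hc
  conv_lhs => rw [hA.spectral_theorem, Unitary.conjStarAlgAut_apply]
  rw [← mulVec_mulVec, ← mulVec_mulVec, dotProduct_mulVec (star x) U]
  have h1 : star x ᵥ* U = star c := by
    rw [hc, star_mulVec, star_eq_conjTranspose, conjTranspose_conjTranspose]
  rw [h1, dotProduct_mulVec]
  have h2 : star c ᵥ* diagonal (RCLike.ofReal ∘ hA.eigenvalues) = fun i => (hA.eigenvalues i : ℂ) * star (c i) := by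
    funext i
    simp [vecMul_diagonal, mul_comm]
  rw [h2]
  push_cast
  simp only [dotProduct]
  congr 1
  funext i
  simp only [Complex.normSq_eq_conj_mul_self, Complex.ofReal_mul, Complex.star_def]
  ring

lemma inertia_le (ε : ℝ) {m k : Type*} [Fintype m] [DecidableEq m] [Fintype k] [DecidableEq k]
    (A : Matrix m m ℂ) (hA : A.IsHermitian) (B : Matrix k k ℂ) (hB : B.IsHermitian)
    (S : Matrix m k ℂ) (hS : A = S * B * Sᴴ) :
    (Finset.univ.filter fun i => 0 < ε * hA.eigenvalues i).card
      ≤ (Finset.univ.filter fun j => 0 < ε * hB.eigenvalues j).card := by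
  classical
  set μ := hA.eigenvalues with hμ
  set ν := hB.eigenvalues with hν
  set U : Matrix m m ℂ := (hA.eigenvectorUnitary : Matrix m m ℂ) with hU
  set V : Matrix k k ℂ := (hB.eigenvectorUnitary : Matrix k k ℂ) with hV
  -- extension-by-zero linear map
  let ext : ({i : m // 0 < ε * μ i} → ℂ) →ₗ[ℂ] (m → ℂ) :=
    { toFun := fun c i => if h : 0 < ε * μ i then c ⟨i, h⟩ else 0
      map_add' := by
        intro a b; funext i; by_cases h : 0 < ε * μ i <;> simp [h]
      map_smul' := by
        intro r a; funext i; by_cases h : 0 < ε * μ i <;> simp [h] }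
  let φ : ({i : m // 0 < ε * μ i} → ℂ) →ₗ[ℂ] ({j : k // 0 < ε * ν j} → ℂ) :=
    (LinearMap.funLeft ℂ ℂ Subtype.val).comp
      (((star V * Sᴴ * U).mulVecLin).comp ext)
  have hinj : Function.Injective φ := by
    rw [← LinearMap.ker_eq_bot, LinearMap.ker_eq_bot']
    intro c hc
    obtain ⟨e, he⟩ : ∃ e : m → ℂ, e = ext c := ⟨_, rfl⟩
    obtain ⟨x, hx⟩ : ∃ x : m → ℂ, x = U *ᵥ e := ⟨_, rfl⟩
    obtain ⟨y, hy⟩ : ∃ y : k → ℂ, y = Sᴴ *ᵥ x := ⟨_, rfl⟩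
    obtain ⟨d, hd⟩ : ∃ d : k → ℂ, d = star V *ᵥ y := ⟨_, rfl⟩
    have hdW : (star V * Sᴴ * U) *ᵥ e = d := by
      rw [hd, hy, hx, mulVec_mulVec, mulVec_mulVec]
    have hd0 : ∀ j, 0 < ε * ν j → d j = 0 := by
      intro j hj
      have h := congrFun hc ⟨j, hj⟩
      simp only [φ, LinearMap.coe_comp, Function.comp_apply, mulVecLin_apply,
        LinearMap.funLeft_apply, ← he, hdW, Pi.zero_apply] at h
      exact h
    have hUe : star U *ᵥ x = e := by
      rw [hx, mulVec_mulVec, Unitary.coe_star_mul_self hA.eigenvectorUnitary, one_mulVec]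
    have hqA : star x ⬝ᵥ A *ᵥ x = ((∑ i, μ i * Complex.normSq (e i) : ℝ) : ℂ) := by
      rw [quad_eq A hA x, ← hU, hUe]
    have hxy : star x ⬝ᵥ A *ᵥ x = star y ⬝ᵥ B *ᵥ y := by
      have h1 : (S * B * Sᴴ) *ᵥ x = S *ᵥ (B *ᵥ y) := by
        rw [hy, mulVec_mulVec, mulVec_mulVec]
      have h2 : star y = star x ᵥ* S := by
        rw [hy, star_mulVec, conjTranspose_conjTranspose]
      rw [hS, h1, dotProduct_mulVec (star x) S, ← h2]
    have hqB : star y ⬝ᵥ B *ᵥ y = ((∑ j, ν j * Complex.normSq (d j) : ℝ) : ℂ) := by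
      rw [quad_eq B hB y, ← hV, ← hd]
    have hreal : (∑ i, μ i * Complex.normSq (e i)) = ∑ j, ν j * Complex.normSq (d j) := by
      have := hqA.symm.trans (hxy.trans hqB)
      exact_mod_cast this
    have hL : (0:ℝ) ≤ ∑ i, (ε * μ i) * Complex.normSq (e i) := by
      apply Finset.sum_nonneg
      intro i _
      by_cases h : 0 < ε * μ i
      · exact mul_nonneg h.le (Complex.normSq_nonneg _)
      · have : e i = 0 := by simp [he, ext, h]
        simp [this]
    have hR : (∑ j, (ε * ν j) * Complex.normSq (d j)) ≤ 0 := by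
      apply Finset.sum_nonpos
      intro j _
      by_cases h : 0 < ε * ν j
      · simp [hd0 j h]
      · push_neg at h
        exact mul_nonpos_of_nonpos_of_nonneg (by simpa using h) (Complex.normSq_nonneg _)
    have hLR : (∑ i, (ε * μ i) * Complex.normSq (e i)) = ∑ j, (ε * ν j) * Complex.normSq (d j) := by
      simp only [mul_assoc, ← Finset.mul_sum]
      rw [hreal]
    have hzero : (∑ i, (ε * μ i) * Complex.normSq (e i)) = 0 :=
      le_antisymm (hLR ▸ hR) hL
    have hterm : ∀ i ∈ Finset.univ, (ε * μ i) * Complex.normSq (e i) = 0 := by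
      apply (Finset.sum_eq_zero_iff_of_nonneg _).mp hzero
      intro i _
      by_cases h : 0 < ε * μ i
      · exact mul_nonneg h.le (Complex.normSq_nonneg _)
      · have : e i = 0 := by simp [he, ext, h]
        simp [this]
    funext i
    show c i = 0
    have h0 : e i.1 = 0 := by
      have := hterm i.1 (Finset.mem_univ _)
      rcases mul_eq_zero.mp this with h | h
      · exact absurd h (ne_of_gt i.2)
      · exact Complex.normSq_eq_zero.mp h
    have hce : e i.1 = c i := by simp [he, ext, i.2]
    rw [← hce, h0]
  have hcard := LinearMap.finrank_le_finrank_of_injective hinj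
  rw [Module.finrank_fintype_fun_eq_card, Module.finrank_fintype_fun_eq_card] at hcard
  simpa [Fintype.card_subtype] using hcard

lemma card_split {ι : Type*} [Fintype ι] (f : ι → ℝ) :
    (Finset.univ.filter fun i => f i ≠ 0).card
      = (Finset.univ.filter fun i => 0 < f i).card
        + (Finset.univ.filter fun i => f i < 0).card := by
  classical
  rw [← Finset.card_union_of_disjoint]
  · congr 1
    ext i
    simp only [Finset.mem_filter, Finset.mem_union, Finset.mem_univ, true_and]
    constructor
    · intro h; rcases lt_or_gt_of_ne h with h' | h'
      · exact Or.inr h'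
      · exact Or.inl h'
    · rintro (h | h) <;> [exact ne_of_gt h; exact ne_of_lt h]
  · rw [Finset.disjoint_left]
    intro i hi hi'
    simp only [Finset.mem_filter] at hi hi'
    linarith [hi.2, hi'.2]

theorem stmt_17 {n : ℕ} (H : Matrix (Fin n) (Fin n) ℂ) (hH : H.IsHermitian)
    (hdiag : ∀ u, H u u = 0) (t : Fin n → ℕ) (ht : ∀ u, 0 < t u)
    (H' : Matrix ((u : Fin n) × Fin (t u)) ((u : Fin n) × Fin (t u)) ℂ)
    (hH'def : ∀ x y : (u : Fin n) × Fin (t u),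
      H' x y = if x.1 = y.1 then 0 else H x.1 y.1)
    (hH' : H'.IsHermitian) :
    H'.rank = H.rank ∧
    (Finset.univ.filter fun i => 0 < hH'.eigenvalues i).card
      = (Finset.univ.filter fun i => 0 < hH.eigenvalues i).card ∧
    (Finset.univ.filter fun i => hH'.eigenvalues i < 0).card
      = (Finset.univ.filter fun i => hH.eigenvalues i < 0).card := by
  classical
  let S : Matrix ((u : Fin n) × Fin (t u)) (Fin n) ℂ := fun x u => if x.1 = u then 1 else 0
  have hSH : H' = S * H * Sᴴ := by
    ext x y
    rw [hH'def]
    have : (S * H * Sᴴ) x y = H x.1 y.1 := by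
      simp only [mul_apply, conjTranspose_apply]
      simp [S, mul_apply, conjTranspose_apply, ite_mul, mul_ite, apply_ite (star : ℂ → ℂ)]
    rw [this]
    by_cases h : x.1 = y.1
    · rw [if_pos h, ← h, hdiag]
    · rw [if_neg h]
  let T : Matrix (Fin n) ((u : Fin n) × Fin (t u)) ℂ := fun u x => if x = ⟨u, ⟨0, ht u⟩⟩ then 1 else 0
  have hTH : H = T * H' * Tᴴ := by
    ext u v
    have : (T * H' * Tᴴ) u v = H' ⟨u, ⟨0, ht u⟩⟩ ⟨v, ⟨0, ht v⟩⟩ := by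
      simp only [mul_apply, conjTranspose_apply]
      simp [T, mul_apply, conjTranspose_apply, ite_mul, mul_ite, apply_ite (star : ℂ → ℂ)]
    rw [this, hH'def]
    by_cases h : u = v
    · subst h; simp [hdiag]
    · simp [h]
  have key : ∀ ε : ℝ,
      (Finset.univ.filter fun i => 0 < ε * hH'.eigenvalues i).card
        = (Finset.univ.filter fun i => 0 < ε * hH.eigenvalues i).card := fun ε =>
    le_antisymm (inertia_le ε H' hH' H hH S hSH) (inertia_le ε H hH H' hH' T hTH)
  have hpos : (Finset.univ.filter fun i => 0 < hH'.eigenvalues i).card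
      = (Finset.univ.filter fun i => 0 < hH.eigenvalues i).card := by
    have := key 1
    simpa using this
  have hneg : (Finset.univ.filter fun i => hH'.eigenvalues i < 0).card
      = (Finset.univ.filter fun i => hH.eigenvalues i < 0).card := by
    have := key (-1)
    simpa [neg_mul, one_mul, neg_pos] using this
  refine ⟨?_, hpos, hneg⟩
  rw [hH'.rank_eq_card_non_zero_eigs, hH.rank_eq_card_non_zero_eigs,
    Fintype.card_subtype, Fintype.card_subtype, card_split, card_split, hpos, hneg]
end

section
/- Let H be the 5×5 Hermitian matrix with zero diagonal and upper entries H_{12}=1, H_{13}=i, H_{14}=-i, H_{23}=-i, H_{24}=i, H_{34}=0, H_{15}=-i·conj(z_1), H_{25}=i·conj(z_2), H_{35}=conj(z_3), H_{45}=conj(z_4), where z_1,z_2,z_3,z_4 ∈ ℂ. Then det H = 2|z_3 + z_4|^2. -/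
set_option maxHeartbeats 4000000

open Complex Matrix

theorem stmt_19 (z₁ z₂ z₃ z₄ : ℂ) :
    (!![0, 1, I, -I, -I * (starRingEnd ℂ) z₁;
        1, 0, -I, I, I * (starRingEnd ℂ) z₂;
        -I, I, 0, 0, (starRingEnd ℂ) z₃;
        I, -I, 0, 0, (starRingEnd ℂ) z₄;
        I * z₁, -I * z₂, z₃, z₄, 0] : Matrix (Fin 5) (Fin 5) ℂ).det
      = ((2 * ‖z₃ + z₄‖ ^ 2 : ℝ) : ℂ) := by
  have h : ((2 * ‖z₃ + z₄‖ ^ 2 : ℝ) : ℂ)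
      = 2 * ((z₃ + z₄) * ((starRingEnd ℂ) z₃ + (starRingEnd ℂ) z₄)) := by
    rw [show ((2 * ‖z₃+z₄‖ ^ 2 : ℝ):ℂ) = 2 * ((‖z₃+z₄‖ ^2 :ℝ):ℂ) from by push_cast; ring]
    rw [← Complex.normSq_eq_norm_sq, ← Complex.mul_conj, map_add]
  rw [h]
  simp only [Matrix.det_succ_row_zero, Fin.sum_univ_succ, Fin.sum_univ_zero,
    Fin.zero_succAbove, Fin.succ_succAbove_zero, Fin.succ_succAbove_succ,
    Matrix.det_fin_zero, Matrix.of_apply, Matrix.submatrix_apply, Matrix.submatrix_submatrix,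
    Function.comp_apply, Matrix.cons_val', Matrix.cons_val_zero, Matrix.cons_val_succ,
    Matrix.head_cons, Matrix.head_fin_const, Matrix.cons_val_fin_one, Matrix.empty_val',
    Fin.val_zero, Fin.val_succ, pow_succ, pow_zero]
  ring_nf
  rw [Complex.I_sq]
  ring
end
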